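/- arXiv:quant-ph/9912087 — 3 statements merged into one kernel-verified Lean document; each statement's English description precedes it below -/
import Mathlib

section
/- Let H be a finite-dimensional complex Hilbert space of dimension N, with three copies H1, H2, H3, orthonormal bases (ε''_n) of H1, (ε'_h) of H2, (ε_α) of H3, and let (λ_{hα}) be an N×N unitary matrix. Define ψ := Σ_{h,α} λ_{hα} ε'_h ⊗ ε_α ∈ H2 ⊗ H3 and ξ := N^{-1/2} Σ_μ ε''_μ ⊗ ε'_μ ∈ H1 ⊗ H2, and let F := |ξ⟩⟨ξ| ⊗ 1_3. Let U : H3 → H1 be the unitary determined by U ε_α = Σ_h conj(λ_{hα}) ε''_h. Then for every density operator ρ on H1, the partial trace over H1 ⊗ H2 of F (ρ ⊗ |ψ⟩⟨ψ|) F equals (1/N) U* ρ U. -/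
/-!
Since `F = |ξ⟩⟨ξ| ⊗ 1₃`, for any operator `Q` one has `F Q F = |ξ⟩⟨ξ| ⊗ ⟨ξ|Q|ξ⟩`, so tracing
out `H₁ ⊗ H₂` leaves `‖ξ‖² ⟨ξ|Q|ξ⟩`. For the maximally entangled `ξ` we have `‖ξ‖² = N · N⁻¹`,
and `⟨ξ|ρ ⊗ |ψ⟩⟨ψ||ξ⟩` only sees the diagonal entries `(j, j)` of both factors, giving
`N⁻¹ Σ_{j,k} λ_{jα} ρ_{jk} conj(λ_{kβ}) = N⁻¹ (U* ρ U)_{αβ}`.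
-/

open scoped BigOperators ComplexOrder

/-- The rank-one operator `|v⟩⟨v| : x ↦ ⟨v,x⟩v`, as a matrix. -/
noncomputable def outer {ι : Type*} (v : ι → ℂ) : Matrix ι ι ℂ :=
  fun i j => v i * star (v j)

/-- Partial trace over the first two tensor factors. -/
noncomputable def ptrace12 {ι₁ ι₂ ι₃ : Type*} [Fintype ι₁] [Fintype ι₂]
    (Q : Matrix (ι₁ × ι₂ × ι₃) (ι₁ × ι₂ × ι₃) ℂ) : Matrix ι₃ ι₃ ℂ :=
  fun a b => ∑ i : ι₁, ∑ h : ι₂, Q (i, h, a) (i, h, b)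

open scoped Matrix

theorem Fintype.sum_prod_assoc {α β γ M : Type*} [Fintype α] [Fintype β] [Fintype γ]
    [AddCommMonoid M] (f : α × β × γ → M) :
    ∑ r, f r = ∑ x : α × β, ∑ c, f (x.1, x.2, c) := by
  rw [← (Equiv.prodAssoc α β γ).sum_comp, Fintype.sum_prod_type]
  rfl

section Sandwich

variable {ι₁ ι₂ ι₃ : Type*} [Fintype ι₁] [Fintype ι₂]

/-- `⟨ξ| Q |ξ⟩` for `ξ ∈ H₁ ⊗ H₂`, an operator on `H₃`. -/
noncomputable def partialMatrixElement (ξ : ι₁ × ι₂ → ℂ)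
    (Q : Matrix (ι₁ × ι₂ × ι₃) (ι₁ × ι₂ × ι₃) ℂ) : Matrix ι₃ ι₃ ℂ :=
  fun a b => ∑ x, ∑ y, star (ξ x) * Q (x.1, x.2, a) (y.1, y.2, b) * ξ y

variable [Fintype ι₃] [DecidableEq ι₃] (ξ : ι₁ × ι₂ → ℂ)
  {F : Matrix (ι₁ × ι₂ × ι₃) (ι₁ × ι₂ × ι₃) ℂ}

theorem mul_mul_apply_of_outer_tensor_one
    (hF : ∀ p q, F p q =
      ξ (p.1, p.2.1) * star (ξ (q.1, q.2.1)) * (if p.2.2 = q.2.2 then 1 else 0))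
    (Q : Matrix (ι₁ × ι₂ × ι₃) (ι₁ × ι₂ × ι₃) ℂ) (p q : ι₁ × ι₂ × ι₃) :
    (F * Q * F) p q =
      ξ (p.1, p.2.1) * star (ξ (q.1, q.2.1)) * partialMatrixElement ξ Q p.2.2 q.2.2 := by
  simp only [Matrix.mul_apply, Fintype.sum_prod_assoc, hF, partialMatrixElement, mul_ite, mul_one,
    mul_zero, ite_mul, zero_mul, Finset.sum_ite_eq, Finset.sum_ite_eq', Finset.mem_univ, if_true, Finset.sum_mul,
    Finset.mul_sum]
  rw [Finset.sum_comm]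
  exact Finset.sum_congr rfl fun _ _ => Finset.sum_congr rfl fun _ _ => by ring

theorem ptrace12_mul_mul_of_outer_tensor_one
    (hF : ∀ p q, F p q =
      ξ (p.1, p.2.1) * star (ξ (q.1, q.2.1)) * (if p.2.2 = q.2.2 then 1 else 0))
    (Q : Matrix (ι₁ × ι₂ × ι₃) (ι₁ × ι₂ × ι₃) ℂ) :
    ptrace12 (F * Q * F) = (∑ x, ξ x * star (ξ x)) • partialMatrixElement ξ Q := by
  ext a b
  simp only [ptrace12, mul_mul_apply_of_outer_tensor_one ξ hF, Matrix.smul_apply, smul_eq_mul,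
    ← Finset.sum_mul, Fintype.sum_prod_type]

end Sandwich

section Diagonal

variable {ι κ : Type*} [Fintype ι] [DecidableEq ι] {ξ : ι × ι → ℂ} {c : ℂ}

theorem sum_mul_star_of_diagonal (hξ : ∀ μ μ', ξ (μ, μ') = if μ = μ' then c else 0) :
    ∑ x, ξ x * star (ξ x) = Fintype.card ι * (star c * c) := by
  simp [Fintype.sum_prod_type, hξ, mul_comm]

theorem partialMatrixElement_of_diagonal (hξ : ∀ μ μ', ξ (μ, μ') = if μ = μ' then c else 0)
    (Q : Matrix (ι × ι × κ) (ι × ι × κ) ℂ) (a b : κ) :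
    partialMatrixElement ξ Q a b = star c * c * ∑ j, ∑ k, Q (j, j, a) (k, k, b) := by
  simp only [partialMatrixElement, hξ, RCLike.star_def, apply_ite (starRingEnd ℂ), map_zero,
    ite_mul, zero_mul, mul_ite, mul_zero, Fintype.sum_prod_type, Finset.sum_ite_eq,
    Finset.mem_univ, if_true, Finset.sum_ite_irrel, Finset.sum_const_zero, Finset.mul_sum]
  exact Finset.sum_congr rfl fun _ _ => Finset.sum_congr rfl fun _ _ => mul_right_comm _ _ _

end Diagonal

theorem sum_diagonal_tensor_apply {ι κ : Type*} [Fintype ι] (ρ : Matrix ι ι ℂ) (ψ : ι × κ → ℂ)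
    (U : Matrix ι κ ℂ) (hU : ∀ h a, U h a = star (ψ (h, a))) (a b : κ) :
    ∑ j, ∑ k, (Matrix.of fun p q : ι × ι × κ => ρ p.1 q.1 * ψ p.2 * star (ψ q.2)) (j, j, a) (k, k, b) =
      (Uᴴ * ρ * U) a b := by
  simp only [Matrix.of_apply, Matrix.mul_apply, Matrix.conjTranspose_apply, hU, star_star,
    Finset.sum_mul]
  rw [Finset.sum_comm]
  exact Finset.sum_congr rfl fun _ _ => Finset.sum_congr rfl fun _ _ => by ring

theorem star_ofReal_inv_sqrt_mul_self {r : ℝ} (hr : 0 ≤ r) :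
    star (((Real.sqrt r)⁻¹ : ℝ) : ℂ) * (((Real.sqrt r)⁻¹ : ℝ) : ℂ) = (r : ℂ)⁻¹ := by
  rw [Complex.star_def, Complex.conj_ofReal, ← Complex.ofReal_mul, ← mul_inv,
    Real.mul_self_sqrt hr, Complex.ofReal_inv]

theorem weak_teleportation_solution_general
    (N : ℕ)
    (L : Matrix (Fin N) (Fin N) ℂ)
    (ψ : Fin N × Fin N → ℂ) (hψ : ∀ h a, ψ (h, a) = L h a)
    (ξ : Fin N × Fin N → ℂ)
    (hξ : ∀ μ μ', ξ (μ, μ') = if μ = μ' then (((Real.sqrt N)⁻¹ : ℝ) : ℂ) else 0)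
    (F : Matrix (Fin N × Fin N × Fin N) (Fin N × Fin N × Fin N) ℂ)
    (hF : ∀ p q, F p q =
      ξ (p.1, p.2.1) * star (ξ (q.1, q.2.1)) * (if p.2.2 = q.2.2 then 1 else 0))
    (U : Matrix (Fin N) (Fin N) ℂ) (hU : ∀ h a, U h a = star (L h a)) :
    ∀ ρ : Matrix (Fin N) (Fin N) ℂ, ρ.PosSemidef → ρ.trace = 1 →
      ptrace12 (F * (Matrix.of fun (p q : Fin N × Fin N × Fin N) => ρ p.1 q.1 * ψ p.2 * star (ψ q.2)) * F) =
        ((N : ℂ))⁻¹ • (U.conjTranspose * ρ * U) := by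
  intro ρ _ _
  have hc := star_ofReal_inv_sqrt_mul_self (Nat.cast_nonneg (α := ℝ) N)
  rw [Complex.ofReal_natCast] at hc
  have hU' : ∀ h a, U h a = star (ψ (h, a)) := fun h a => by rw [hU, hψ]
  have hξρψξ : partialMatrixElement ξ
      (Matrix.of fun (p q : Fin N × Fin N × Fin N) => ρ p.1 q.1 * ψ p.2 * star (ψ q.2)) =
        (N : ℂ)⁻¹ • (Uᴴ * ρ * U) := by
    ext a b
    rw [partialMatrixElement_of_diagonal hξ, hc, sum_diagonal_tensor_apply ρ ψ U hU',
      Matrix.smul_apply, smul_eq_mul]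
  rw [ptrace12_mul_mul_of_outer_tensor_one ξ hF, sum_mul_star_of_diagonal hξ, hc,
    Fintype.card_fin, hξρψξ, smul_smul]
  congr 1
  simpa using inv_mul_mul_self ((N : ℂ)⁻¹)

/-- **Proposition 3.1** (solution of the weak teleportation problem):
with `ψ = Σ λ_{hα} ε'_h ⊗ ε_α`, `ξ = N^{-1/2} Σ_μ ε''_μ ⊗ ε'_μ`,
`F = |ξ⟩⟨ξ| ⊗ 1₃` and `U ε_α = Σ_h conj(λ_{hα}) ε''_h`, one has
`tr₁₂ (F (ρ ⊗ |ψ⟩⟨ψ|) F) = (1/N) U* ρ U` for every density operator `ρ` on `H₁`.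
(All three spaces are `ℂ^N`; vectors and operators are written in the fixed
orthonormal bases, so `H₁ = H₂ = H₃ = Fin N → ℂ`.) -/
theorem weak_teleportation_solution
    (N : ℕ) (hN : 0 < N)
    (L : Matrix (Fin N) (Fin N) ℂ) (hL : L ∈ Matrix.unitaryGroup (Fin N) ℂ)
    (ψ : Fin N × Fin N → ℂ) (hψ : ∀ h a, ψ (h, a) = L h a)
    (ξ : Fin N × Fin N → ℂ)
    (hξ : ∀ μ μ', ξ (μ, μ') = if μ = μ' then (((Real.sqrt N)⁻¹ : ℝ) : ℂ) else 0)
    (F : Matrix (Fin N × Fin N × Fin N) (Fin N × Fin N × Fin N) ℂ)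
    (hF : ∀ p q, F p q =
      ξ (p.1, p.2.1) * star (ξ (q.1, q.2.1)) * (if p.2.2 = q.2.2 then 1 else 0))
    (U : Matrix (Fin N) (Fin N) ℂ) (hU : ∀ h a, U h a = star (L h a)) :
    ∀ ρ : Matrix (Fin N) (Fin N) ℂ, ρ.PosSemidef → ρ.trace = 1 →
      ptrace12 (F * (Matrix.of fun (p q : Fin N × Fin N × Fin N) => ρ p.1 q.1 * ψ p.2 * star (ψ q.2)) * F) =
        ((N : ℂ))⁻¹ • (U.conjTranspose * ρ * U) :=
  weak_teleportation_solution_general N L ψ hψ ξ hξ F hF U hU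
end

section
/- With the notation of the weak teleportation setup (ψ, ξ, F, U as in Proposition 3.1), for every density operator ρ on H1 one has tr_{123}(F(ρ ⊗ |ψ⟩⟨ψ|)F) = 1/N (a constant independent of ρ), and consequently U · [tr_{12}(F(ρ ⊗ |ψ⟩⟨ψ|)F) / tr(F(ρ ⊗ |ψ⟩⟨ψ|)F)] · U* = ρ. -/
/-!
`F = N⁻¹ • (|Ω⟩⟨Ω| ⊗ 1)` with `Ω = ∑ μ, ε''_μ ⊗ ε'_μ`. Sandwiching `ρ ⊗ |ψ⟩⟨ψ|` between two
copies of `F` and tracing out `H₁ ⊗ H₂` leaves `N⁻¹ • V ρ V*` with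
`V = Lᵀ` unitary. Hence the total trace is `N⁻¹ tr ρ = N⁻¹`, and `U = V*` undoes the conjugation.
-/

open scoped BigOperators ComplexOrder

open Matrix

theorem trace_ptrace12 {ι₁ ι₂ ι₃ : Type*} [Fintype ι₁] [Fintype ι₂] [Fintype ι₃]
    (Q : Matrix (ι₁ × ι₂ × ι₃) (ι₁ × ι₂ × ι₃) ℂ) : (ptrace12 Q).trace = Q.trace := by
  simp only [trace, diag, ptrace12, Fintype.sum_prod_type]
  rw [Finset.sum_comm]
  exact Finset.sum_congr rfl fun _ _ => Finset.sum_comm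

section
variable {ι κ : Type*} [DecidableEq ι] [DecidableEq κ]

/-- `c • (|Ω⟩⟨Ω| ⊗ 1)`, where `Ω = ∑ μ, ε_μ ⊗ ε_μ` is the unnormalised maximally entangled vector. -/
def entangledProjector (c : ℂ) : Matrix (ι × ι × κ) (ι × ι × κ) ℂ :=
  of fun p q => if p.1 = p.2.1 ∧ q.1 = q.2.1 ∧ p.2.2 = q.2.2 then c else 0

theorem eq_entangledProjector_of_outer (ξ : ι × ι → ℂ) (c : ℝ)
    (hξ : ∀ μ μ', ξ (μ, μ') = if μ = μ' then (c : ℂ) else 0)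
    (F : Matrix (ι × ι × κ) (ι × ι × κ) ℂ)
    (hF : ∀ p q, F p q =
      ξ (p.1, p.2.1) * star (ξ (q.1, q.2.1)) * (if p.2.2 = q.2.2 then 1 else 0)) :
    F = entangledProjector ((c : ℂ) ^ 2) := by
  ext p q
  simp only [hF, hξ, entangledProjector, of_apply, ite_and]
  split_ifs <;> simp [sq]

variable [Fintype ι] [Fintype κ]

theorem entangledProjector_mul_mul_apply (c : ℂ) (X : Matrix (ι × ι × κ) (ι × ι × κ) ℂ)
    (i h i' h' : ι) (a b : κ) :
    (entangledProjector c * X * entangledProjector c : Matrix (ι × ι × κ) _ ℂ)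
        (i, h, a) (i', h', b) =
      if i = h ∧ i' = h' then c ^ 2 * ∑ j, ∑ k, X (j, j, a) (k, k, b) else 0 := by
  simp only [entangledProjector, mul_apply, of_apply, Fintype.sum_prod_type, ite_and,
    ite_mul, mul_ite, zero_mul, mul_zero, Finset.sum_ite_eq, Finset.sum_ite_eq',
    Finset.mem_univ, if_true, Finset.sum_ite_irrel, Finset.sum_const_zero]
  split_ifs
  · rw [Finset.sum_comm, Finset.mul_sum]
    exact Finset.sum_congr rfl fun j _ => by rw [Finset.sum_mul, Finset.mul_sum]; ring_nf
  all_goals rfl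

theorem ptrace12_entangledProjector_mul_mul (c : ℂ) (X : Matrix (ι × ι × κ) (ι × ι × κ) ℂ) :
    ptrace12 (entangledProjector c * X * entangledProjector c) =
      of fun a b => (Fintype.card ι : ℂ) * c ^ 2 * ∑ j, ∑ k, X (j, j, a) (k, k, b) := by
  ext a b
  simp [ptrace12, entangledProjector_mul_mul_apply, mul_assoc]

theorem ptrace12_entangledProjector_sandwich (c : ℂ) (ρ : Matrix ι ι ℂ) (L : Matrix ι κ ℂ) :
    ptrace12 (entangledProjector c *
        of (fun p q : ι × ι × κ => ρ p.1 q.1 * L p.2.1 p.2.2 * star (L q.2.1 q.2.2)) *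
        entangledProjector c) =
      ((Fintype.card ι : ℂ) * c ^ 2) • (Lᵀ * ρ * Lᵀᴴ) := by
  rw [ptrace12_entangledProjector_mul_mul]
  ext a b
  simp only [of_apply, Matrix.smul_apply, smul_eq_mul, mul_apply, transpose_apply,
    conjTranspose_apply, Finset.sum_mul, Finset.mul_sum]
  rw [Finset.sum_comm]
  exact Finset.sum_congr rfl fun _ _ => Finset.sum_congr rfl fun _ _ => by ring

end

theorem Unitary.star_mul_conj_mul_self {R : Type*} [Semiring R] [StarMul R] {u : R}
    (hu : u ∈ unitary R) (x : R) :
    star u * (u * x * star u) * u = x :=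
  (Unitary.conjStarAlgAut ℕ R ⟨u, hu⟩).symm_apply_apply x

theorem Matrix.trace_conj_of_mem_unitaryGroup {n R : Type*} [Fintype n] [DecidableEq n]
    [CommRing R] [StarRing R] {V : Matrix n n R} (hV : V ∈ unitaryGroup n R) (A : Matrix n n R) :
    (V * A * Vᴴ).trace = A.trace := by
  rw [trace_mul_cycle, ← star_eq_conjTranspose, Unitary.star_mul_self_of_mem hV, one_mul]

/-- In the weak teleportation setup of Proposition 3.1, for every density
operator `ρ` on `H₁` one has `tr₁₂₃ (F (ρ ⊗ |ψ⟩⟨ψ|) F) = 1/N` (a constant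
independent of `ρ`), and consequently
`U ⬝ [tr₁₂ (F (ρ ⊗ |ψ⟩⟨ψ|) F) / tr (F (ρ ⊗ |ψ⟩⟨ψ|) F)] ⬝ U* = ρ`. -/
theorem weak_teleportation_trace_and_recovery
    (N : ℕ) (hN : 0 < N)
    (L : Matrix (Fin N) (Fin N) ℂ) (hL : L ∈ Matrix.unitaryGroup (Fin N) ℂ)
    (ψ : Fin N × Fin N → ℂ) (hψ : ∀ h a, ψ (h, a) = L h a)
    (ξ : Fin N × Fin N → ℂ)
    (hξ : ∀ μ μ', ξ (μ, μ') = if μ = μ' then (((Real.sqrt N)⁻¹ : ℝ) : ℂ) else 0)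
    (F : Matrix (Fin N × Fin N × Fin N) (Fin N × Fin N × Fin N) ℂ)
    (hF : ∀ p q, F p q =
      ξ (p.1, p.2.1) * star (ξ (q.1, q.2.1)) * (if p.2.2 = q.2.2 then 1 else 0))
    (U : Matrix (Fin N) (Fin N) ℂ) (hU : ∀ h a, U h a = star (L h a)) :
    ∀ ρ : Matrix (Fin N) (Fin N) ℂ, ρ.PosSemidef → ρ.trace = 1 →
      (F * (Matrix.of fun (p q : Fin N × Fin N × Fin N) =>
          ρ p.1 q.1 * ψ p.2 * star (ψ q.2)) * F).trace = ((N : ℂ))⁻¹ ∧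
      U * (((F * (Matrix.of fun (p q : Fin N × Fin N × Fin N) =>
          ρ p.1 q.1 * ψ p.2 * star (ψ q.2)) * F).trace)⁻¹ •
        ptrace12 (F * (Matrix.of fun (p q : Fin N × Fin N × Fin N) =>
          ρ p.1 q.1 * ψ p.2 * star (ψ q.2)) * F)) * U.conjTranspose = ρ := by
  intro ρ _ hρ
  have hN' : (N : ℂ) ≠ 0 := Nat.cast_ne_zero.mpr hN.ne'
  obtain rfl : ψ = fun p => L p.1 p.2 := funext fun p => hψ p.1 p.2
  beta_reduce
  obtain rfl : F = entangledProjector ((N : ℂ)⁻¹) := by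
    rw [eq_entangledProjector_of_outer ξ _ hξ F hF]
    congr 1
    push_cast
    rw [inv_pow, ← Complex.ofReal_pow, Real.sq_sqrt (Nat.cast_nonneg N), Complex.ofReal_natCast]
  obtain rfl : U = Lᵀᴴ := ext fun h a => hU h a
  have hV : Lᵀ ∈ unitaryGroup (Fin N) ℂ := transpose_mem_unitaryGroup_iff.mpr hL
  have hptrace := ptrace12_entangledProjector_sandwich ((N : ℂ)⁻¹) ρ L
  rw [Fintype.card_fin, sq, ← mul_assoc, mul_inv_cancel₀ hN', one_mul] at hptrace
  rw [← trace_ptrace12, hptrace, trace_smul, trace_conj_of_mem_unitaryGroup hV, hρ, smul_eq_mul,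
    mul_one]
  refine ⟨rfl, ?_⟩
  rw [inv_inv, smul_smul, mul_inv_cancel₀ hN', one_smul, conjTranspose_conjTranspose]
  exact Unitary.star_mul_conj_mul_self hV ρ
end

section
/- For each α ∈ {0,1}^m, the triple (ψ, ξ_α, U) solves the weak teleportation problem: with N = 2^m, F_α := |ξ_α⟩⟨ξ_α| ⊗ 1_3, ψ = Σ λ_{hα} ε'_h ⊗ ε_α for a unitary matrix (λ_{hα}), and U the unitary with U ε_α = Σ_h conj(λ_{hα}) ε''_h, there exists for each α a unitary U_α : H3 → H1 such that tr_{12}(F_α (ρ ⊗ |ψ⟩⟨ψ|) F_α) = (1/N) U_α* ρ U_α for all density operators ρ on H1. Moreover the F_α are mutually orthogonal projections. -/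
open scoped BigOperators ComplexOrder

private lemma fin2_cases (x : Fin 2) : x = 0 ∨ x = 1 := by fin_cases x <;> simp

private lemma neg_one_pow_mul_self (n : ℕ) : ((-1:ℂ))^n * (-1)^n = 1 := by
  rw [← mul_pow]; simp

private lemma sign_sum_zero {m : ℕ} (α β : Fin m → Fin 2) (hne : α ≠ β) :
    ∑ μ : Fin m → Fin 2,
      ((-1:ℂ)) ^ (∑ j, (1 - (μ j : ℕ)) * (α j : ℕ)) *
      ((-1:ℂ)) ^ (∑ j, (1 - (μ j : ℕ)) * (β j : ℕ)) = 0 := by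
  obtain ⟨j₀, hj₀⟩ := Function.ne_iff.mp hne
  set f : (Fin m → Fin 2) → ℂ := fun μ =>
      ((-1:ℂ)) ^ (∑ j, (1 - (μ j : ℕ)) * (α j : ℕ)) *
      ((-1:ℂ)) ^ (∑ j, (1 - (μ j : ℕ)) * (β j : ℕ)) with hf
  have hc : (α j₀ : ℕ) + (β j₀ : ℕ) = 1 := by
    have := Fin.val_ne_of_ne hj₀
    omega
  set g : (Fin m → Fin 2) → Fin m → Fin 2 :=
      fun μ => Function.update μ j₀ (μ j₀ + 1) with hg
  have hginv : Function.Involutive g := by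
    intro μ
    funext j
    by_cases h : j = j₀
    · subst h
      simp only [hg, Function.update_self]
      rcases fin2_cases (μ j) with h | h <;> rw [h] <;> decide
    · simp [hg, Function.update_of_ne h]
  have hsum : ∑ μ, f (g μ) = ∑ μ, f μ := hginv.bijective.sum_comp f
  have hflip : ∀ μ, f (g μ) = - f μ := by
    intro μ
    have key : ∀ γ : Fin m → Fin 2,
        (∑ j, (1 - (g μ j : ℕ)) * (γ j : ℕ)) =
        (∑ j ∈ Finset.univ.erase j₀, (1 - (μ j : ℕ)) * (γ j : ℕ))
          + (1 - ((μ j₀ + 1 : Fin 2) : ℕ)) * (γ j₀ : ℕ) := by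
      intro γ
      rw [← Finset.sum_erase_add _ _ (Finset.mem_univ j₀)]
      congr 1
      · exact Finset.sum_congr rfl fun j hj => by
          rw [hg]; simp [Function.update_of_ne (Finset.ne_of_mem_erase hj)]
      · simp [hg]
    have key' : ∀ γ : Fin m → Fin 2,
        (∑ j, (1 - (μ j : ℕ)) * (γ j : ℕ)) =
        (∑ j ∈ Finset.univ.erase j₀, (1 - (μ j : ℕ)) * (γ j : ℕ))
          + (1 - ((μ j₀ : Fin 2) : ℕ)) * (γ j₀ : ℕ) := by
      intro γ
      rw [← Finset.sum_erase_add _ _ (Finset.mem_univ j₀)]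
    rw [hf]
    simp only [key, key', pow_add]
    have hterm : ((-1:ℂ)) ^ ((1 - ((μ j₀ + 1 : Fin 2) : ℕ)) * (α j₀ : ℕ)) *
        ((-1:ℂ)) ^ ((1 - ((μ j₀ + 1 : Fin 2) : ℕ)) * (β j₀ : ℕ)) =
        - (((-1:ℂ)) ^ ((1 - ((μ j₀ : Fin 2) : ℕ)) * (α j₀ : ℕ)) *
        ((-1:ℂ)) ^ ((1 - ((μ j₀ : Fin 2) : ℕ)) * (β j₀ : ℕ))) := by
      rw [← pow_add, ← pow_add, ← Nat.mul_add, ← Nat.mul_add, hc, Nat.mul_one, Nat.mul_one]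
      have e1 : ((0 + 1 : Fin 2) : ℕ) = 1 := rfl
      have e2 : ((1 + 1 : Fin 2) : ℕ) = 0 := rfl
      rcases fin2_cases (μ j₀) with h | h
      · rw [h, e1]; norm_num
      · rw [h, e2]; norm_num
    linear_combination ((-1:ℂ)) ^ (∑ j ∈ Finset.univ.erase j₀, (1 - (μ j : ℕ)) * (α j : ℕ)) *
      ((-1:ℂ)) ^ (∑ j ∈ Finset.univ.erase j₀, (1 - (μ j : ℕ)) * (β j : ℕ)) * hterm
  have h2 : ∑ μ, f (g μ) = - ∑ μ, f μ := by simp [hflip]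
  have h3 : ∑ μ, f μ = - ∑ μ, f μ := hsum.symm.trans h2
  linear_combination h3 / 2

private lemma GMul {n : Type*} [Fintype n] [DecidableEq n]
    (v : n → ℂ) (G M : Matrix (n × n × n) (n × n × n) ℂ)
    (hG : ∀ p q, G p q = (if p.1 = p.2.1 then v p.1 else 0) *
      star (if q.1 = q.2.1 then v q.1 else 0) * (if p.2.2 = q.2.2 then 1 else 0))
    (p s : n × n × n) :
    (G * M) p s = (if p.1 = p.2.1 then v p.1 else 0) *
      ∑ μ : n, star (v μ) * M (μ, μ, p.2.2) s := by
  rw [Matrix.mul_apply]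
  simp only [Fintype.sum_prod_type, hG]
  simp only [apply_ite, star_zero, ite_mul, mul_ite, mul_zero, zero_mul, mul_one,
    Finset.sum_ite_eq, Finset.sum_ite_eq', Finset.mem_univ, if_true]
  split_ifs with h <;> simp [h, Finset.mul_sum, mul_assoc]

private lemma MulH {n : Type*} [Fintype n] [DecidableEq n]
    (w : n → ℂ) (H M : Matrix (n × n × n) (n × n × n) ℂ)
    (hH : ∀ p q, H p q = (if p.1 = p.2.1 then w p.1 else 0) *
      star (if q.1 = q.2.1 then w q.1 else 0) * (if p.2.2 = q.2.2 then 1 else 0))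
    (p q : n × n × n) :
    (M * H) p q = star (if q.1 = q.2.1 then w q.1 else 0) *
      ∑ ν : n, w ν * M p (ν, ν, q.2.2) := by
  rw [Matrix.mul_apply]
  simp only [Fintype.sum_prod_type, hH]
  simp only [apply_ite, star_zero, ite_mul, mul_ite, mul_zero, zero_mul, mul_one,
    Finset.sum_ite_eq, Finset.sum_ite_eq', Finset.mem_univ, if_true]
  split_ifs with h
  · simp only [h, if_true, Finset.mul_sum]
    refine Finset.sum_congr rfl fun ν _ => ?_
    rw [Finset.sum_ite_eq]
    simp only [Finset.mem_univ, if_true]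
    ring
  · simp

private lemma FMF {n : Type*} [Fintype n] [DecidableEq n]
    (v w : n → ℂ) (G H M : Matrix (n × n × n) (n × n × n) ℂ)
    (hG : ∀ p q, G p q = (if p.1 = p.2.1 then v p.1 else 0) *
      star (if q.1 = q.2.1 then v q.1 else 0) * (if p.2.2 = q.2.2 then 1 else 0))
    (hH : ∀ p q, H p q = (if p.1 = p.2.1 then w p.1 else 0) *
      star (if q.1 = q.2.1 then w q.1 else 0) * (if p.2.2 = q.2.2 then 1 else 0))
    (p q : n × n × n) :
    (G * M * H) p q = (if p.1 = p.2.1 then v p.1 else 0) *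
      star (if q.1 = q.2.1 then w q.1 else 0) *
      ∑ μ : n, ∑ ν : n, star (v μ) * w ν * M (μ, μ, p.2.2) (ν, ν, q.2.2) := by
  rw [MulH w H (G * M) hH p q]
  simp only [GMul v G M hG]
  simp only [Finset.mul_sum]
  rw [Finset.sum_comm]
  refine Finset.sum_congr rfl fun μ _ => Finset.sum_congr rfl fun ν _ => by ring

noncomputable def ptrace12' {ι₁ ι₂ ι₃ : Type*} [Fintype ι₁] [Fintype ι₂]
    (Q : Matrix (ι₁ × ι₂ × ι₃) (ι₁ × ι₂ × ι₃) ℂ) : Matrix ι₃ ι₃ ℂ :=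
  fun a b => ∑ i : ι₁, ∑ h : ι₂, Q (i, h, a) (i, h, b)

/-- **Corollary 6.1.** With `N = 2^m`, bases indexed by multi-indices in
`{0,1}^m`, `ψ = Σ λ_{hα} ε'_h ⊗ ε_α` for a unitary matrix `λ`, and
`ξ_α = 2^{-m/2} Σ_μ (−1)^{σ_α(μ)} ε''_μ ⊗ ε'_μ`,
`F_α = |ξ_α⟩⟨ξ_α| ⊗ 1₃`: the `F_α` are mutually orthogonal projections, and
for each `α` there is a unitary key `U_α : H₃ → H₁` with
`tr₁₂ (F_α (ρ ⊗ |ψ⟩⟨ψ|) F_α) = (1/N) U_α* ρ U_α` for all density operators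
`ρ`; i.e. each triple `(ψ, ξ_α, U_α)` solves the weak teleportation problem
and the family solves the general one. -/
theorem general_teleportation_power_of_two
    (m : ℕ)
    (L : Matrix (Fin m → Fin 2) (Fin m → Fin 2) ℂ)
    (hL : L ∈ Matrix.unitaryGroup (Fin m → Fin 2) ℂ)
    (ψ : (Fin m → Fin 2) × (Fin m → Fin 2) → ℂ) (hψ : ∀ h a, ψ (h, a) = L h a)
    (ξ : (Fin m → Fin 2) → (Fin m → Fin 2) × (Fin m → Fin 2) → ℂ)
    (hξ : ∀ α μ μ', ξ α (μ, μ') =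
      if μ = μ' then
        ((Real.sqrt (2 ^ m) : ℂ))⁻¹ *
          ((-1 : ℂ)) ^ (∑ j, (1 - (μ j : ℕ)) * (α j : ℕ))
      else 0)
    (F : (Fin m → Fin 2) →
      Matrix ((Fin m → Fin 2) × (Fin m → Fin 2) × (Fin m → Fin 2))
        ((Fin m → Fin 2) × (Fin m → Fin 2) × (Fin m → Fin 2)) ℂ)
    (hF : ∀ α p q, F α p q =
      ξ α (p.1, p.2.1) * star (ξ α (q.1, q.2.1)) * (if p.2.2 = q.2.2 then 1 else 0)) :
    (∀ α, (F α).conjTranspose = F α ∧ F α * F α = F α) ∧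
    (∀ α β, α ≠ β → F α * F β = 0) ∧
    (∀ α, ∃ U ∈ Matrix.unitaryGroup (Fin m → Fin 2) ℂ,
      ∀ ρ : Matrix (Fin m → Fin 2) (Fin m → Fin 2) ℂ, ρ.PosSemidef → ρ.trace = 1 →
        ptrace12' (F α * (Matrix.of
            fun (p q : (Fin m → Fin 2) × (Fin m → Fin 2) × (Fin m → Fin 2)) =>
              ρ p.1 q.1 * ψ p.2 * star (ψ q.2)) * F α) =
          ((2 ^ m : ℂ))⁻¹ • (U.conjTranspose * ρ * U)) := by
  -- notation
  set tc : ℂ := ((Real.sqrt (2 ^ m) : ℂ))⁻¹ with htc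
  set w : (Fin m → Fin 2) → (Fin m → Fin 2) → ℂ := fun α μ => ((-1:ℂ)) ^ (∑ j, (1 - (μ j : ℕ)) * (α j : ℕ)) with hw
  set v : (Fin m → Fin 2) → (Fin m → Fin 2) → ℂ := fun α μ => tc * w α μ with hv
  have htt : tc * tc = ((2:ℂ) ^ m)⁻¹ := by
    rw [htc, ← mul_inv, ← Complex.ofReal_mul,
      Real.mul_self_sqrt (by positivity : (0:ℝ) ≤ 2 ^ m)]
    rw [show ((2 ^ m : ℝ) : ℂ) = (2:ℂ) ^ m by push_cast; ring]
  have hwstar : ∀ α μ, star (w α μ) = w α μ := by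
    intro α μ; simp [hw]
  have hvstar : ∀ α μ, star (v α μ) = v α μ := by
    intro α μ
    simp only [hv, star_mul', hwstar, htc]
    rw [star_inv₀]
    rw [Complex.star_def, Complex.conj_ofReal]
  have hww : ∀ α μ, w α μ * w α μ = 1 := fun α μ => neg_one_pow_mul_self _
  have hvv : ∀ α μ, star (v α μ) * v α μ = ((2:ℂ) ^ m)⁻¹ := by
    intro α μ
    rw [hvstar, hv]
    calc tc * w α μ * (tc * w α μ) = tc * tc * (w α μ * w α μ) := by ring
    _ = ((2:ℂ) ^ m)⁻¹ := by rw [htt, hww, mul_one]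
  have hsumvv : ∀ α, ∑ μ : Fin m → Fin 2, star (v α μ) * v α μ = 1 := by
    intro α
    simp only [hvv]
    rw [Finset.sum_const, Finset.card_univ, Fintype.card_fun, Fintype.card_fin,
      Fintype.card_fin, nsmul_eq_mul]
    push_cast
    exact mul_inv_cancel₀ (by positivity : ((2:ℂ))^m ≠ 0)
  have horth : ∀ α β, α ≠ β → ∑ μ : Fin m → Fin 2, star (v α μ) * v β μ = 0 := by
    intro α β hne
    have : ∀ μ, star (v α μ) * v β μ = tc * tc * (w α μ * w β μ) := by
      intro μ; rw [hvstar]; simp only [hv]; ring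
    simp only [this, ← Finset.mul_sum]
    rw [hw]
    rw [sign_sum_zero α β hne, mul_zero]
  have hFform : ∀ α p q, F α p q = (if p.1 = p.2.1 then v α p.1 else 0) *
      star (if q.1 = q.2.1 then v α q.1 else 0) * (if p.2.2 = q.2.2 then 1 else 0) := by
    intro α p q
    rw [hF α p q, hξ, hξ]
  -- hermitian
  have hherm : ∀ α, (F α).conjTranspose = F α := by
    intro α
    ext p q
    rw [Matrix.conjTranspose_apply, hFform, hFform]
    simp only [star_mul', star_star, apply_ite (star : ℂ → ℂ), star_zero, star_one, hvstar]
    have hd : (if q.2.2 = p.2.2 then (1:ℂ) else 0) = (if p.2.2 = q.2.2 then 1 else 0) := by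
      by_cases h : p.2.2 = q.2.2 <;> simp [h, eq_comm]
    rw [hd]; ring
  -- key sum with identity in the middle
  have hkey1 : ∀ α β (x y : Fin m → Fin 2), (∑ μ : Fin m → Fin 2, ∑ ν : Fin m → Fin 2, star (v α μ) * v β ν *
      (1 : Matrix ((Fin m → Fin 2) × (Fin m → Fin 2) × (Fin m → Fin 2)) ((Fin m → Fin 2) × (Fin m → Fin 2) × (Fin m → Fin 2)) ℂ) (μ, μ, x) (ν, ν, y)) =
      (if x = y then 1 else 0) * ∑ μ : Fin m → Fin 2, star (v α μ) * v β μ := by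
    intro α β x y
    have hcond : ∀ μ ν : Fin m → Fin 2, ((μ, μ, x) = ((ν, ν, y) : (Fin m → Fin 2) × (Fin m → Fin 2) × (Fin m → Fin 2))) ↔ (μ = ν ∧ x = y) := by
      intro μ ν
      constructor
      · intro h; obtain ⟨h1, h2, h3⟩ := Prod.mk.injEq .. ▸ h
        exact ⟨h1, by simpa using h⟩
      · rintro ⟨rfl, rfl⟩; rfl
    simp_rw [Matrix.one_apply, hcond, ite_and, mul_ite, mul_one, mul_zero,
      Finset.sum_ite_eq, Finset.mem_univ, if_true]
    by_cases h : x = y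
    · simp [h]
    · simp [h]
  -- projections
  have hproj : ∀ α, F α * F α = F α := by
    intro α
    have hmm : F α * F α = F α * 1 * F α := by rw [Matrix.mul_one]
    rw [hmm]
    ext p q
    rw [FMF (v α) (v α) (F α) (F α) 1 (hFform α) (hFform α) p q, hkey1, hsumvv, mul_one,
      hFform]
  -- orthogonality
  have horthF : ∀ α β, α ≠ β → F α * F β = 0 := by
    intro α β hne
    have hmm : F α * F β = F α * 1 * F β := by rw [Matrix.mul_one]
    rw [hmm]
    ext p q
    rw [FMF (v α) (v β) (F α) (F β) 1 (hFform α) (hFform β) p q, hkey1,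
      horth α β hne, mul_zero, mul_zero, Matrix.zero_apply]
  refine ⟨fun α => ⟨hherm α, hproj α⟩, horthF, fun α => ?_⟩
  -- the unitary key
  set U : Matrix (Fin m → Fin 2) (Fin m → Fin 2) ℂ := Matrix.of fun μ x => w α μ * star (L μ x) with hU
  have hL1 : L * star L = 1 := Matrix.mem_unitaryGroup_iff.mp hL
  have hLsum : ∀ μ ν : Fin m → Fin 2, ∑ x : Fin m → Fin 2, L μ x * star (L ν x) = if μ = ν then 1 else 0 := by
    intro μ ν
    have h0 := congrFun (congrFun hL1 μ) ν
    rwa [Matrix.mul_apply, Matrix.one_apply] at h0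
  have hLsum' : ∀ μ ν : Fin m → Fin 2, ∑ x : Fin m → Fin 2, star (L μ x) * L ν x = if μ = ν then 1 else 0 := by
    intro μ ν
    have h0 := congrArg star (hLsum μ ν)
    rw [star_sum] at h0
    simp only [star_mul', star_star] at h0
    rw [h0]
    by_cases h : μ = ν <;> simp [h]
  have hUmem : U ∈ Matrix.unitaryGroup (Fin m → Fin 2) ℂ := by
    rw [Matrix.mem_unitaryGroup_iff]
    ext μ ν
    rw [Matrix.mul_apply, Matrix.one_apply]
    have : ∀ x : Fin m → Fin 2, U μ x * (star U) x ν = w α μ * w α ν * (star (L μ x) * L ν x) := by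
      intro x
      rw [Matrix.star_apply, hU]
      simp only [Matrix.of_apply]
      rw [star_mul', hwstar, star_star]
      ring
    simp only [this, ← Finset.mul_sum, hLsum']
    by_cases h : μ = ν
    · subst h; simp [hww]
    · simp [h]
  refine ⟨U, hUmem, fun ρ hpsd htr => ?_⟩
  ext a b
  simp only [ptrace12']
  set P : Matrix ((Fin m → Fin 2) × (Fin m → Fin 2) × (Fin m → Fin 2)) ((Fin m → Fin 2) × (Fin m → Fin 2) × (Fin m → Fin 2)) ℂ := Matrix.of
      fun (p q : (Fin m → Fin 2) × (Fin m → Fin 2) × (Fin m → Fin 2)) => ρ p.1 q.1 * ψ p.2 * star (ψ q.2) with hP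
  set S : ℂ := ∑ μ : Fin m → Fin 2, ∑ ν : Fin m → Fin 2, star (v α μ) * v α ν * P (μ, μ, a) (ν, ν, b) with hS
  have hentry : ∀ i h : Fin m → Fin 2, (F α * P * F α) (i, h, a) (i, h, b) =
      if i = h then star (v α i) * v α i * S else 0 := by
    intro i h
    rw [FMF (v α) (v α) (F α) (F α) P (hFform α) (hFform α) (i, h, a) (i, h, b)]
    by_cases hih : i = h
    · subst hih
      show (if i = i then v α i else 0) * star (if i = i then v α i else 0) *
          (∑ μ : Fin m → Fin 2, ∑ ν : Fin m → Fin 2,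
            star (v α μ) * v α ν * P (μ, μ, a) (ν, ν, b)) = _
      rw [← hS, if_pos rfl, if_pos rfl, hvstar]
    · simp [hih]
  simp only [hentry]
  simp only [Finset.sum_ite_eq, Finset.sum_ite_eq', Finset.mem_univ, if_true]
  rw [← Finset.sum_mul, hsumvv, one_mul]
  -- now show S equals the RHS entry
  rw [Matrix.smul_apply, Matrix.mul_apply, smul_eq_mul, Finset.mul_sum]
  rw [hS]
  rw [Finset.sum_comm]
  refine Finset.sum_congr rfl fun ν _ => ?_
  rw [Matrix.mul_apply, Finset.sum_mul, Finset.mul_sum]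
  refine Finset.sum_congr rfl fun μ _ => ?_
  rw [hvstar]
  simp only [hP, Matrix.of_apply, Matrix.conjTranspose_apply, hU, hv]
  rw [hψ, hψ]
  rw [star_mul', hwstar, star_star]
  linear_combination (w α μ * L μ a * ρ μ ν * (w α ν * star (L ν b))) * htt
end
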